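/- arXiv:2505.11636 — 3 statements merged into one kernel-verified Lean document; each statement's English description precedes it below -/
import Mathlib

section
/- If N ≥ γ ≥ 1 are natural numbers and 2^N ≤ N^γ · Γ holds for a positive real Γ ≥ 1, then N ≤ 4·(γ·log(γ+1) + log Γ), where log is the natural logarithm. -/
lemma log_le_div_e {x : ℝ} (hx : 0 < x) : Real.log x ≤ x / Real.exp 1 := by
  have h := Real.log_le_sub_one_of_pos (x := x / Real.exp 1) (by positivity)
  have : Real.log (x / Real.exp 1) = Real.log x - 1 := by
    rw [Real.log_div (ne_of_gt hx) (ne_of_gt (Real.exp_pos 1)), Real.log_exp]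
  linarith [this ▸ h]

theorem pdim_bound_deg_zero (N γ : ℕ) (hγ : 1 ≤ γ) (hNγ : γ ≤ N) (Γ : ℝ) (hΓ : 1 ≤ Γ)
    (h : (2 : ℝ) ^ N ≤ (N : ℝ) ^ γ * Γ) :
    (N : ℝ) ≤ 4 * (γ * Real.log (γ + 1) + Real.log Γ) := by
  have hN1 : 1 ≤ N := le_trans hγ hNγ
  have hNpos : (0 : ℝ) < N := by exact_mod_cast lt_of_lt_of_le one_pos hN1
  have hγpos : (0 : ℝ) < γ := by exact_mod_cast hγ
  have hγ1 : (0 : ℝ) < (γ : ℝ) + 1 := by linarith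
  have hΓpos : (0 : ℝ) < Γ := lt_of_lt_of_le one_pos hΓ
  -- take logs
  have hlog : (N : ℝ) * Real.log 2 ≤ γ * Real.log N + Real.log Γ := by
    have h2 : Real.log ((2:ℝ)^N) ≤ Real.log ((N : ℝ) ^ γ * Γ) :=
      Real.log_le_log (by positivity) h
    rw [Real.log_pow, Real.log_mul (by positivity) (ne_of_gt hΓpos), Real.log_pow] at h2
    linarith
  -- bound log N
  have hlogN : Real.log N ≤ Real.log ((γ:ℝ) + 1) + (N : ℝ) / (((γ:ℝ)+1) * Real.exp 1) := by
    have : Real.log N = Real.log ((γ:ℝ)+1) + Real.log ((N:ℝ) / ((γ:ℝ)+1)) := by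
      rw [← Real.log_mul (ne_of_gt hγ1) (by positivity)]
      congr 1
      field_simp
    rw [this]
    have h2 := log_le_div_e (x := (N:ℝ) / ((γ:ℝ)+1)) (by positivity)
    have : (N:ℝ) / ((γ:ℝ)+1) / Real.exp 1 = (N : ℝ) / (((γ:ℝ)+1) * Real.exp 1) := by
      field_simp
    linarith [this ▸ h2]
  -- γ * (N / ((γ+1)*e)) ≤ N / e
  have hkey : (γ:ℝ) * ((N : ℝ) / (((γ:ℝ)+1) * Real.exp 1)) ≤ (N:ℝ) / Real.exp 1 := by
    have heq : (γ:ℝ) * ((N : ℝ) / (((γ:ℝ)+1) * Real.exp 1)) =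
        ((γ:ℝ) / ((γ:ℝ)+1)) * ((N:ℝ) / Real.exp 1) := by
      field_simp
    have hfrac : (γ:ℝ) / ((γ:ℝ)+1) ≤ 1 := by
      rw [div_le_one hγ1]; linarith
    rw [heq]
    exact mul_le_of_le_one_left (by positivity) hfrac
  have hchain : (N : ℝ) * Real.log 2 - (N:ℝ) / Real.exp 1 ≤
      (γ:ℝ) * Real.log ((γ:ℝ)+1) + Real.log Γ := by
    nlinarith [mul_le_mul_of_nonneg_left hlogN (le_of_lt hγpos)]
  -- numeric: log 2 - 1/e > 1/4
  have hnum : (1:ℝ)/4 + 1 / Real.exp 1 ≤ Real.log 2 := by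
    have h1 : (2.7182818283 : ℝ) < Real.exp 1 := Real.exp_one_gt_d9
    have h2 : (0.6931471803 : ℝ) < Real.log 2 := Real.log_two_gt_d9
    have : 1 / Real.exp 1 < 1 / 2.7182818283 := by
      apply div_lt_div_of_pos_left one_pos (by norm_num) h1
    nlinarith
  have : (N:ℝ) * ((1:ℝ)/4) ≤ (γ:ℝ) * Real.log ((γ:ℝ)+1) + Real.log Γ := by
    have hNe : (N:ℝ) / Real.exp 1 = (N:ℝ) * (1 / Real.exp 1) := by ring
    nlinarith [hNpos, hnum]
  push_cast
  linarith
end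

section
/- If N, γ, W are positive integers, β ≥ 1 an integer, Γ ≥ 1 real, and 2^N ≤ 2·N^γ·Γ·(2eNβ/W)^W, then N ≤ 4·(γ·log(2γ+1) + W·log(4eβ) + log(2Γ)). -/
set_option maxHeartbeats 1600000 in
theorem pdim_bound_deg_pos (N γ W β : ℕ) (hN : 0 < N) (hγ : 0 < γ) (hW : 0 < W)
    (hβ : 1 ≤ β) (Γ : ℝ) (hΓ : 1 ≤ Γ)
    (h : (2 : ℝ) ^ N ≤ 2 * (N : ℝ) ^ γ * Γ * (2 * Real.exp 1 * N * β / W) ^ W) :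
    (N : ℝ) ≤ 4 * (γ * Real.log (2 * γ + 1) + W * Real.log (4 * Real.exp 1 * β)
      + Real.log (2 * Γ)) := by
  have hN1 : (1:ℝ) ≤ N := by exact_mod_cast hN
  have hβ1 : (1:ℝ) ≤ β := by exact_mod_cast hβ
  have hW1 : (1:ℝ) ≤ W := by exact_mod_cast hW
  have hγ1 : (1:ℝ) ≤ γ := by exact_mod_cast hγ
  have hNpos : (0:ℝ) < N := by linarith
  have hWpos : (0:ℝ) < W := by linarith
  have hγpos : (0:ℝ) < γ := by linarith
  have hβpos : (0:ℝ) < β := by linarith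
  have hΓpos : (0:ℝ) < Γ := by linarith
  have he : (0:ℝ) < Real.exp 1 := Real.exp_pos 1
  have key : ∀ x c : ℝ, 0 < x → 0 < c → Real.log x ≤ x / c + Real.log c - 1 := by
    intro x c hx hc
    have h1 : Real.log (x / c) ≤ x / c - 1 := Real.log_le_sub_one_of_pos (by positivity)
    rw [Real.log_div (ne_of_gt hx) (ne_of_gt hc)] at h1
    linarith
  -- take logs of h
  have hlog := Real.log_le_log (by positivity) h
  rw [Real.log_pow, Real.log_mul (by positivity) (by positivity),
    Real.log_mul (by positivity) (by positivity), Real.log_pow,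
    Real.log_mul (by positivity) (by positivity), Real.log_pow,
    Real.log_div (by positivity) (by positivity),
    Real.log_mul (by positivity) (by positivity),
    Real.log_mul (by positivity) (by positivity),
    Real.log_mul (by positivity) (by positivity), Real.log_exp] at hlog
  -- hlog : N * log 2 ≤ log 2 + γ * log N + log Γ + W * (log 2 + 1 + log N + log β - log W)
  have h1 := key N (2 * Real.exp 1 * γ) hNpos (by positivity)
  have h2 := key N (2 * Real.exp 1 * W) hNpos (by positivity)
  rw [Real.log_mul (by positivity) (by positivity),
    Real.log_mul (by positivity) (by positivity), Real.log_exp] at h1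
  rw [Real.log_mul (by positivity) (by positivity),
    Real.log_mul (by positivity) (by positivity), Real.log_exp] at h2
  -- h1 : log N ≤ N / (2eγ) + (log 2 + 1 + log γ) - 1
  have hγN : (γ:ℝ) * Real.log N ≤ N / (2 * Real.exp 1) + γ * (Real.log 2 + Real.log γ) := by
    have := mul_le_mul_of_nonneg_left h1 (le_of_lt hγpos)
    have heq : (γ:ℝ) * (N / (2 * Real.exp 1 * γ)) = N / (2 * Real.exp 1) := by
      field_simp
    nlinarith [this]
  have hWN : (W:ℝ) * Real.log N - W * Real.log W
      ≤ N / (2 * Real.exp 1) + W * Real.log 2 := by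
    have := mul_le_mul_of_nonneg_left h2 (le_of_lt hWpos)
    have heq : (W:ℝ) * (N / (2 * Real.exp 1 * W)) = N / (2 * Real.exp 1) := by
      field_simp
    nlinarith [this]
  -- combine
  have hcomb : (N:ℝ) * Real.log 2 ≤ N / Real.exp 1 + Real.log 2 + Real.log Γ
      + γ * (Real.log 2 + Real.log γ) + W * (2 * Real.log 2 + 1 + Real.log β) := by
    have hexp : (N:ℝ) / (2 * Real.exp 1) + N / (2 * Real.exp 1) = N / Real.exp 1 := by
      field_simp; ring
    nlinarith [hlog, hγN, hWN]
  -- rewrite RHS logs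
  have hL2Γ : Real.log (2 * Γ) = Real.log 2 + Real.log Γ :=
    Real.log_mul (by norm_num) (ne_of_gt hΓpos)
  have hL4eβ : Real.log (4 * Real.exp 1 * β) = 2 * Real.log 2 + 1 + Real.log β := by
    rw [Real.log_mul (by positivity) (ne_of_gt hβpos),
      Real.log_mul (by norm_num) (ne_of_gt he), Real.log_exp]
    have : (4:ℝ) = 2 * 2 := by norm_num
    rw [this, Real.log_mul (by norm_num) (by norm_num)]
    ring
  have hL2γ : Real.log 2 + Real.log γ ≤ Real.log (2 * γ + 1) := by
    rw [← Real.log_mul (by norm_num) (ne_of_gt hγpos)]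
    exact Real.log_le_log (by positivity) (by linarith)
  -- numeric : 1/4 ≤ log 2 - 1/e
  have hnum : (1:ℝ)/4 ≤ Real.log 2 - 1 / Real.exp 1 := by
    have h2 : (0.6931471803:ℝ) < Real.log 2 := Real.log_two_gt_d9
    have h3 : (2.7182818283:ℝ) < Real.exp 1 := Real.exp_one_gt_d9
    have h4 : (1:ℝ) / Real.exp 1 ≤ 0.368 := by
      rw [div_le_iff₀ he]; linarith
    linarith
  -- positivity of RHS pieces
  have p1 : 0 ≤ Real.log (2 * γ + 1) := Real.log_nonneg (by linarith)
  have he1 : (1:ℝ) ≤ Real.exp 1 := by nlinarith [Real.exp_one_gt_d9]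
  have p2 : 0 ≤ Real.log (4 * Real.exp 1 * β) := Real.log_nonneg (by
    nlinarith [mul_nonneg (sub_nonneg.2 he1) (sub_nonneg.2 hβ1)])
  have p3 : 0 ≤ Real.log (2 * Γ) := Real.log_nonneg (by linarith)
  -- finish
  have hfin : (N:ℝ) * (Real.log 2 - 1 / Real.exp 1)
      ≤ γ * Real.log (2 * γ + 1) + W * Real.log (4 * Real.exp 1 * β) + Real.log (2 * Γ) := by
    have hdiv : (N:ℝ) / Real.exp 1 = N * (1 / Real.exp 1) := by ring
    nlinarith [hcomb, mul_le_mul_of_nonneg_left hL2γ (le_of_lt hγpos)]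
  nlinarith [mul_le_mul_of_nonneg_left hnum (le_of_lt hNpos)]
end

section
/- Suppose a class of real-valued functions H = {h(·,w) : I → ℝ | w ∈ W} with W ⊆ ℝ^W_dim has the property that for any N ≥ γ functions h(I_1,·),...,h(I_N,·) in the dual class, W can be partitioned into at most N^γ·Γ regions on each of which every h(I_j,·) is constant (degree-0 polynomial). Then the pseudo-dimension of H is at most 4·(γ·log(γ+1) + log Γ). -/
/-- `h` pseudo-shatters `N` points: there exist instances and thresholds realizing
all `2^N` sign patterns. -/
def PShatters {ι α : Type*} (h : ι → α → ℝ) (N : ℕ) : Prop :=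
  ∃ (I : Fin N → ι) (y : Fin N → ℝ), ∀ b : Fin N → Bool,
    ∃ w : α, ∀ i, (y i < h (I i) w ↔ b i = true)

lemma log_le_div_exp_one (x : ℝ) (hx : 0 < x) : Real.log x ≤ x / Real.exp 1 := by
  have he : (0:ℝ) < Real.exp 1 := Real.exp_pos 1
  have h1 : Real.log (x / Real.exp 1) ≤ x / Real.exp 1 - 1 :=
    Real.log_le_sub_one_of_pos (by positivity)
  have h2 : Real.log (x / Real.exp 1) = Real.log x - 1 := by
    rw [Real.log_div (ne_of_gt hx) (ne_of_gt he), Real.log_exp]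
  linarith [h1, h2.symm.le]

theorem pdim_of_piecewise_constant_structure {ι α : Type*} (h : ι → α → ℝ)
    (γ Γ : ℕ) (hΓ : 0 < Γ)
    (hstruct : ∀ (N : ℕ), γ ≤ N → ∀ I : Fin N → ι,
      ∃ K : ℕ, K ≤ N ^ γ * Γ ∧ ∃ c : α → Fin K,
        ∀ w w', c w = c w' → ∀ j, h (I j) w = h (I j) w')
    (N : ℕ) (hshat : PShatters h N) :
    (N : ℝ) ≤ 4 * (γ * Real.log (γ + 1) + Real.log Γ) := by
  have hlogΓ : (0:ℝ) ≤ Real.log Γ := by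
    apply Real.log_nonneg
    exact_mod_cast hΓ
  have hlogγ : (0:ℝ) ≤ Real.log (γ + 1) := by
    apply Real.log_nonneg
    have h0 : (0:ℝ) ≤ (γ:ℝ) := Nat.cast_nonneg γ
    linarith
  have hγnn : (0:ℝ) ≤ (γ:ℝ) := Nat.cast_nonneg γ
  have hlog2 : (0.6931471803 : ℝ) < Real.log 2 := Real.log_two_gt_d9
  have hexp1 : (2.7182818283 : ℝ) < Real.exp 1 := Real.exp_one_gt_d9
  have hinvE : (1 : ℝ) / Real.exp 1 < 0.37 := by
    rw [div_lt_iff₀ (Real.exp_pos 1)]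
    nlinarith
  -- Case N = 0
  rcases Nat.eq_zero_or_pos N with hN0 | hNpos
  · simp only [hN0, Nat.cast_zero]
    have := mul_nonneg hγnn hlogγ
    nlinarith
  -- Case N < γ
  rcases lt_or_ge N γ with hlt | hge
  · have hγ1 : 1 ≤ γ := lt_trans hNpos hlt
    have hlog2le : Real.log 2 ≤ Real.log (γ + 1) := by
      apply Real.log_le_log (by norm_num)
      have : (1:ℝ) ≤ (γ:ℝ) := by exact_mod_cast hγ1
      linarith
    have hNlt : (N:ℝ) < γ := by exact_mod_cast hlt
    nlinarith [mul_le_mul_of_nonneg_left hlog2le hγnn]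
  -- Main case: γ ≤ N
  obtain ⟨I, y, hb⟩ := hshat
  obtain ⟨K, hK, c, hc⟩ := hstruct N hge I
  -- build injection from sign patterns to cells
  have hcard : 2 ^ N ≤ K := by
    have hf : Function.Injective (fun b : Fin N → Bool => c (hb b).choose) := by
      intro b b' heq
      funext i
      have h1 := (hb b).choose_spec i
      have h2 := (hb b').choose_spec i
      have heqh := hc _ _ heq i
      have : (b i = true) ↔ (b' i = true) := by
        rw [← h1, ← h2, heqh]
      cases hbi : b i <;> cases hbi' : b' i <;> simp_all
    have := Fintype.card_le_of_injective _ hf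
    simpa using this
  have hKN : (2:ℕ) ^ N ≤ N ^ γ * Γ := le_trans hcard hK
  have hreal : (2:ℝ) ^ N ≤ (N:ℝ) ^ γ * Γ := by exact_mod_cast hKN
  have hNr : (1:ℝ) ≤ (N:ℝ) := by exact_mod_cast hNpos
  have hΓr : (0:ℝ) < (Γ:ℝ) := by exact_mod_cast hΓ
  have hlog : (N:ℝ) * Real.log 2 ≤ γ * Real.log N + Real.log Γ := by
    have := Real.log_le_log (by positivity) hreal
    rw [Real.log_pow, Real.log_mul (by positivity) (ne_of_gt hΓr), Real.log_pow] at this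
    push_cast at this ⊢
    linarith
  -- log N ≤ log (γ+1) + N/(e*(γ+1))
  have hgp1 : (0:ℝ) < (γ:ℝ) + 1 := by positivity
  have hsplit : Real.log N = Real.log ((γ:ℝ) + 1) + Real.log ((N:ℝ) / ((γ:ℝ) + 1)) := by
    rw [← Real.log_mul (ne_of_gt hgp1) (by positivity)]
    congr 1
    field_simp
  have hdiv : Real.log ((N:ℝ) / ((γ:ℝ) + 1)) ≤ (N:ℝ) / ((γ:ℝ) + 1) / Real.exp 1 :=
    log_le_div_exp_one _ (by positivity)
  have hγfrac : (γ:ℝ) / ((γ:ℝ) + 1) ≤ 1 := by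
    rw [div_le_one hgp1]; linarith
  have hkey : (γ:ℝ) * Real.log N ≤ γ * Real.log (γ + 1) + (N:ℝ) / Real.exp 1 := by
    have h3 : (γ:ℝ) * Real.log ((N:ℝ) / ((γ:ℝ) + 1)) ≤ (N:ℝ) / Real.exp 1 := by
      have h4 : (γ:ℝ) * Real.log ((N:ℝ) / ((γ:ℝ) + 1)) ≤
          (γ:ℝ) * ((N:ℝ) / ((γ:ℝ) + 1) / Real.exp 1) := by
        rcases eq_or_lt_of_le hγnn with hz | hpos
        · rw [← hz]; simp
        · exact mul_le_mul_of_nonneg_left hdiv hγnn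
      have h5 : (γ:ℝ) * ((N:ℝ) / ((γ:ℝ) + 1) / Real.exp 1) ≤ (N:ℝ) / Real.exp 1 := by
        rw [div_div]
        have heq2 : (γ:ℝ) * ((N:ℝ) / (((γ:ℝ) + 1) * Real.exp 1)) =
            ((γ:ℝ) / ((γ:ℝ) + 1)) * ((N:ℝ) / Real.exp 1) := by
          field_simp
        rw [heq2]
        exact mul_le_of_le_one_left (by positivity) hγfrac
      linarith
    calc (γ:ℝ) * Real.log N
        = γ * Real.log ((γ:ℝ) + 1) + γ * Real.log ((N:ℝ) / ((γ:ℝ) + 1)) := by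
          rw [hsplit]; ring
      _ ≤ γ * Real.log (γ + 1) + (N:ℝ) / Real.exp 1 := by push_cast; linarith
  have hmain : (N:ℝ) * (Real.log 2 - 1 / Real.exp 1) ≤ γ * Real.log (γ + 1) + Real.log Γ := by
    have : (N:ℝ) * Real.log 2 - (N:ℝ) / Real.exp 1 ≤ γ * Real.log (γ + 1) + Real.log Γ := by
      linarith
    have heq : (N:ℝ) * (Real.log 2 - 1 / Real.exp 1) = (N:ℝ) * Real.log 2 - (N:ℝ) / Real.exp 1 := by
      field_simp
    linarith [heq.le]
  have hquarter : (1:ℝ)/4 ≤ Real.log 2 - 1 / Real.exp 1 := by linarith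
  nlinarith [mul_le_mul_of_nonneg_left hquarter (le_trans zero_le_one hNr : (0:ℝ) ≤ (N:ℝ))]
end
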